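/- Let φ̃_k(x) = T_k(x) − (2(k+2)/(k+3)) T_{k+2}(x) + ((k+1)/(k+3)) T_{k+4}(x). For all j, k ∈ ℕ the entries B̃_{kj} = ⟨φ̃_j, φ̃_k⟩_σ satisfy: B̃_{kk} = (π/2)(c_k + 4((k+2)/(k+3))² + ((k+1)/(k+3))²); B̃_{k,k+2} = B̃_{k+2,k} = −π((k+2)/(k+3) + (k+4)(k+1)/((k+5)(k+3))); B̃_{k,k+4} = B̃_{k+4,k} = (π/2)(k+1)/(k+3); and B̃_{kj} = 0 whenever |j − k| ∉ {0, 2, 4}. In particular the mass matrix of Shen's biharmonic basis has only five nonzero diagonals. -/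

import Mathlib

open Real Polynomial

/-- The k-th Chebyshev polynomial of the first kind, as a real polynomial. -/
noncomputable def chebT (n : ℕ) : Polynomial ℝ := Polynomial.Chebyshev.T ℝ (n : ℤ)

/-- The Chebyshev-weighted inner product `⟨f,g⟩_σ = ∫_{-1}^{1} f g (1-x²)^{-1/2} dx`. -/
noncomputable def chebInner (f g : Polynomial ℝ) : ℝ :=
  ∫ x in (-1:ℝ)..1, f.eval x * g.eval x / Real.sqrt (1 - x ^ 2)

/-- Shen's biharmonic basis function
`φ̃_k = T_k − (2(k+2)/(k+3)) T_{k+2} + ((k+1)/(k+3)) T_{k+4}`. -/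
noncomputable def shenB (k : ℕ) : Polynomial ℝ :=
  chebT k - Polynomial.C ((2 * ((k : ℝ) + 2)) / ((k : ℝ) + 3)) * chebT (k + 2)
    + Polynomial.C (((k : ℝ) + 1) / ((k : ℝ) + 3)) * chebT (k + 4)

/-- `c_0 = 2`, `c_k = 1` for `k ≥ 1`. -/
noncomputable def cCoef (k : ℕ) : ℝ := if k = 0 then 2 else 1

/-!
Under `x = cos θ` the weight `(1 - x²)^{-1/2} dx` becomes `dθ` and `T_m` becomes `cos (m θ)`, so
`⟨T_m, T_n⟩_σ = (π/2) c_m δ_{mn}` (Mathlib's orthogonality for `measureT`). Expanding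
`⟨φ̃_j, φ̃_k⟩_σ` bilinearly gives nine products `⟨T_{j+2a}, T_{k+2b}⟩_σ` with `a, b ≤ 2`; such a
product survives only when `j + 2a = k + 2b`, which forces `|j - k| ∈ {0, 2, 4}`.
-/

open MeasureTheory Polynomial.Chebyshev

lemma chebInner_eq_integral_measureT (f g : ℝ[X]) :
    chebInner f g = ∫ x, f.eval x * g.eval x ∂measureT := by
  simp only [chebInner, integral_measureT, div_eq_mul_inv, Real.sqrt_inv]

lemma chebInner_comm (f g : ℝ[X]) : chebInner f g = chebInner g f := by
  simp only [chebInner, mul_comm (f.eval _)]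

lemma integrable_eval_mul_eval_measureT (f g : ℝ[X]) :
    Integrable (fun x ↦ f.eval x * g.eval x) measureT :=
  integrable_measureT (f * g).continuous.continuousOn |>.congr (by simp)

lemma chebInner_add_left (f g h : ℝ[X]) :
    chebInner (f + g) h = chebInner f h + chebInner g h := by
  simp only [chebInner_eq_integral_measureT, eval_add, add_mul]
  exact integral_add (integrable_eval_mul_eval_measureT f h)
    (integrable_eval_mul_eval_measureT g h)

lemma chebInner_sub_left (f g h : ℝ[X]) :
    chebInner (f - g) h = chebInner f h - chebInner g h := by
  simp only [chebInner_eq_integral_measureT, eval_sub, sub_mul]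
  exact integral_sub (integrable_eval_mul_eval_measureT f h)
    (integrable_eval_mul_eval_measureT g h)

lemma chebInner_C_mul_left (a : ℝ) (f g : ℝ[X]) :
    chebInner (C a * f) g = a * chebInner f g := by
  simp only [chebInner_eq_integral_measureT, eval_mul, eval_C, mul_assoc]
  exact integral_const_mul a _

lemma chebInner_add_right (f g h : ℝ[X]) :
    chebInner f (g + h) = chebInner f g + chebInner f h := by
  simp only [chebInner_comm f, chebInner_add_left]

lemma chebInner_sub_right (f g h : ℝ[X]) :
    chebInner f (g - h) = chebInner f g - chebInner f h := by
  simp only [chebInner_comm f, chebInner_sub_left]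

lemma chebInner_C_mul_right (a : ℝ) (f g : ℝ[X]) :
    chebInner f (C a * g) = a * chebInner f g := by
  simp only [chebInner_comm f, chebInner_C_mul_left]

lemma chebInner_chebT_self (n : ℕ) : chebInner (chebT n) (chebT n) = π / 2 * cCoef n := by
  rw [chebInner_eq_integral_measureT, chebT, cCoef]
  split_ifs with hn
  · subst hn
    rw [Nat.cast_zero, integral_eval_T_real_mul_self_measureT_zero]
    ring
  · rw [integral_T_real_mul_self_measureT_of_ne_zero hn, mul_one]

lemma chebInner_chebT_of_ne {m n : ℕ} (h : m ≠ n) : chebInner (chebT m) (chebT n) = 0 := by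
  rw [chebInner_eq_integral_measureT]
  exact integral_eval_T_real_mul_eval_T_real_measureT_of_ne h

lemma cCoef_of_ne_zero {n : ℕ} (h : n ≠ 0) : cCoef n = 1 := if_neg h

lemma chebInner_shenB_self (k : ℕ) :
    chebInner (shenB k) (shenB k) = π / 2 * (cCoef k + 4 * (((k : ℝ) + 2) / ((k : ℝ) + 3)) ^ 2
        + (((k : ℝ) + 1) / ((k : ℝ) + 3)) ^ 2) := by
  simp only [shenB, chebInner_add_left, chebInner_sub_left, chebInner_C_mul_left,
    chebInner_add_right, chebInner_sub_right, chebInner_C_mul_right]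
  simp (disch := omega) only [chebInner_chebT_of_ne, chebInner_chebT_self, cCoef_of_ne_zero]
  field_simp
  ring

lemma chebInner_shenB_add_two (k : ℕ) :
    chebInner (shenB (k + 2)) (shenB k) = -π * (((k : ℝ) + 2) / ((k : ℝ) + 3)
        + ((k : ℝ) + 4) * ((k : ℝ) + 1) / (((k : ℝ) + 5) * ((k : ℝ) + 3))) := by
  simp only [shenB, chebInner_add_left, chebInner_sub_left, chebInner_C_mul_left,
    chebInner_add_right, chebInner_sub_right, chebInner_C_mul_right]
  simp (disch := omega) only [chebInner_chebT_of_ne, chebInner_chebT_self, cCoef_of_ne_zero]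
  push_cast
  field_simp
  ring

lemma chebInner_shenB_add_four (k : ℕ) :
    chebInner (shenB (k + 4)) (shenB k) = π / 2 * (((k : ℝ) + 1) / ((k : ℝ) + 3)) := by
  simp only [shenB, chebInner_add_left, chebInner_sub_left, chebInner_C_mul_left,
    chebInner_add_right, chebInner_sub_right, chebInner_C_mul_right]
  simp (disch := omega) only [chebInner_chebT_of_ne, chebInner_chebT_self, cCoef_of_ne_zero]
  push_cast
  field_simp
  ring

lemma chebInner_shenB_of_ne {j k : ℕ} (h₀ : j ≠ k) (h₂ : j ≠ k + 2) (h₂' : k ≠ j + 2)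
    (h₄ : j ≠ k + 4) (h₄' : k ≠ j + 4) : chebInner (shenB j) (shenB k) = 0 := by
  simp only [shenB, chebInner_add_left, chebInner_sub_left, chebInner_C_mul_left,
    chebInner_add_right, chebInner_sub_right, chebInner_C_mul_right]
  simp (disch := omega) only [chebInner_chebT_of_ne]
  ring

/-- The mass matrix `B̃_{kj} = ⟨φ̃_j, φ̃_k⟩_σ` of Shen's biharmonic basis has
only five nonzero diagonals, with the stated entries. -/
theorem shen_biharmonic_mass_matrix :
    (∀ k : ℕ, chebInner (shenB k) (shenB k) =
      Real.pi / 2 * (cCoef k + 4 * (((k : ℝ) + 2) / ((k : ℝ) + 3)) ^ 2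
        + (((k : ℝ) + 1) / ((k : ℝ) + 3)) ^ 2)) ∧
    (∀ k : ℕ, chebInner (shenB (k + 2)) (shenB k) =
      -Real.pi * (((k : ℝ) + 2) / ((k : ℝ) + 3)
        + ((k : ℝ) + 4) * ((k : ℝ) + 1) / (((k : ℝ) + 5) * ((k : ℝ) + 3)))) ∧
    (∀ k : ℕ, chebInner (shenB k) (shenB (k + 2)) =
      -Real.pi * (((k : ℝ) + 2) / ((k : ℝ) + 3)
        + ((k : ℝ) + 4) * ((k : ℝ) + 1) / (((k : ℝ) + 5) * ((k : ℝ) + 3)))) ∧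
    (∀ k : ℕ, chebInner (shenB (k + 4)) (shenB k) =
      Real.pi / 2 * (((k : ℝ) + 1) / ((k : ℝ) + 3))) ∧
    (∀ k : ℕ, chebInner (shenB k) (shenB (k + 4)) =
      Real.pi / 2 * (((k : ℝ) + 1) / ((k : ℝ) + 3))) ∧
    (∀ j k : ℕ, j ≠ k → j ≠ k + 2 → k ≠ j + 2 → j ≠ k + 4 → k ≠ j + 4 →
      chebInner (shenB j) (shenB k) = 0) :=
  ⟨chebInner_shenB_self, chebInner_shenB_add_two,
    fun k ↦ (chebInner_comm _ _).trans (chebInner_shenB_add_two k), chebInner_shenB_add_four,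
    fun k ↦ (chebInner_comm _ _).trans (chebInner_shenB_add_four k),
    fun _ _ ↦ chebInner_shenB_of_ne⟩
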